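/- Let f : A → M be a Jordan generalized derivation with associated linear map d, where M is 2-torsion free. The following are equivalent: (1) f(1) belongs to the center of M (i.e., a f(1) = f(1) a for all a ∈ A); (2) d is a Jordan derivation and f(x) = f(1)x + d(x) for all x ∈ A. -/

import Mathlib

/-!
Putting `x = 1` in the defining identity gives `2 f(y) = f(1) y + y f(1) + 2 d(y)`. Hence, `M` being
2-torsion free, `f(1)` is central exactly when `f(y) = f(1) y + d(y)` for all `y`; and once `f` has
this form with `f(1)` central, the term `f(1) y` itself satisfies the Jordan identity with zero
inner map, so subtracting it from the identity for `f` leaves the Jordan identity for `d`.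
-/

open MulOpposite

section Bimodule

variable {A M : Type*} [Ring A] [AddCommGroup M] [Module A M] [Module Aᵐᵒᵖ M]

variable (A) in
/-- The left and right actions of `A` on a bimodule `M` are `a • m` and `op a • m`. -/
def IsCentral (m : M) : Prop :=
  ∀ a : A, a • m = op a • m

def IsJordanGeneralizedDerivation (f d : A → M) : Prop :=
  ∀ x y : A, f (x * y + y * x) = op y • f x + y • f x + x • d y + op x • d y

abbrev IsJordanDerivation (d : A → M) : Prop :=
  IsJordanGeneralizedDerivation d d

theorem add_self_injective (htf : ∀ m : M, m + m = 0 → m = 0) :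
    Function.Injective (fun m : M => m + m) := by
  intro m n hmn
  refine sub_eq_zero.mp (htf _ ?_)
  rw [sub_add_sub_comm, sub_eq_zero]
  exact hmn

namespace IsJordanGeneralizedDerivation

variable {F : Type*} [FunLike F A M] [AddMonoidHomClass F A M] {f : F} {d : A → M}

theorem map_add_self (hf : IsJordanGeneralizedDerivation f d) (y : A) :
    f y + f y = op y • f 1 + y • f 1 + (d y + d y) := by
  have hy := hf 1 y
  rw [one_mul, mul_one, map_add, one_smul, op_one, one_smul] at hy
  rw [hy, add_assoc]

theorem eq_op_smul_map_one_add (htf : ∀ m : M, m + m = 0 → m = 0)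
    (hf : IsJordanGeneralizedDerivation f d) (hc : IsCentral A (f 1)) (x : A) :
    f x = op x • f 1 + d x :=
  add_self_injective htf <| show f x + f x = _ + _ by
    rw [hf.map_add_self x, hc x]
    abel

theorem isCentral_map_one (hf : IsJordanGeneralizedDerivation f d)
    (hfd : ∀ x, f x = op x • f 1 + d x) : IsCentral A (f 1) := by
  intro a
  have key : op a • f 1 + (op a • f 1 + (d a + d a)) =
      op a • f 1 + (a • f 1 + (d a + d a)) := by
    rw [← add_assoc _ (a • f 1), ← hf.map_add_self a, hfd a]
    abel
  exact (add_right_cancel (add_left_cancel key)).symm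

theorem isJordanDerivation_of_isCentral [SMulCommClass A Aᵐᵒᵖ M] {f d : A → M}
    (hf : IsJordanGeneralizedDerivation f d) (hc : IsCentral A (f 1))
    (hfd : ∀ x, f x = op x • f 1 + d x) : IsJordanDerivation d := by
  intro x y
  have hright : op y • (op x • f 1) = op (x * y) • f 1 := by
    rw [smul_smul, ← op_mul]
  have hleft : y • (op x • f 1) = op (y * x) • f 1 := by
    rw [smul_comm, hc y, smul_smul, ← op_mul]
  have hxy := hfd (x * y + y * x)
  rw [hf x y, hfd x, smul_add, smul_add, hright, hleft, op_add, add_smul] at hxy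
  linear_combination (norm := abel) -hxy

end IsJordanGeneralizedDerivation

end Bimodule

/-- For a Jordan generalized derivation `f : A → M` with associated linear map
`d`, with `M` 2-torsion free: `f 1` is central iff `d` is a Jordan derivation
and `f x = f 1 · x + d x` for all `x`. -/
theorem jordan_generalized_derivation_center_iff
    {R A M : Type*} [CommRing R] [Ring A] [Algebra R A]
    [AddCommGroup M] [Module R M] [Module A M] [Module Aᵐᵒᵖ M]
    [SMulCommClass A Aᵐᵒᵖ M]
    (htf : ∀ m : M, m + m = 0 → m = 0)
    (f d : A →ₗ[R] M)
    (h : ∀ x y : A, f (x * y + y * x) =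
      op y • f x + y • f x + x • d y + op x • d y) :
    (∀ a : A, a • f 1 = op a • f 1) ↔
    ((∀ x y : A, d (x * y + y * x) =
        op y • d x + y • d x + x • d y + op x • d y) ∧
      (∀ x : A, f x = op x • f 1 + d x)) := by
  constructor
  · intro hc
    have hfd := IsJordanGeneralizedDerivation.eq_op_smul_map_one_add htf h hc
    exact ⟨IsJordanGeneralizedDerivation.isJordanDerivation_of_isCentral h hc hfd, hfd⟩
  · rintro ⟨-, hfd⟩
    exact IsJordanGeneralizedDerivation.isCentral_map_one h hfd
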